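/- (Unambiguous state discrimination criterion.) Let H be a finite-dimensional complex inner product space, let φ_1,…,φ_n ∈ H be unit vectors with Gram matrix X (X_{ij} = ⟨φ_i, φ_j⟩), and let η_1,…,η_n ∈ [0,1]. The following are equivalent: (i) the matrix X − Γ is positive semidefinite, where Γ = diag(η_1,…,η_n); (ii) there exist a finite-dimensional complex inner product space K, an orthonormal family χ_1,…,χ_n ∈ K, and an isometric realization of the transformation φ_i ↦ χ_i with success probabilities η_i. -/

import Mathlib

open scoped ComplexOrder InnerProductSpace
open Matrix Submodule

/-!
If `U φᵢ = √ηᵢ • J χᵢ + βᵢ` with `χ` orthonormal and every `βᵢ` orthogonal to the range of `J`,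
expanding `⟪U φᵢ, U φⱼ⟫` shows that `X - Γ` is the Gram matrix of the `βᵢ`, hence positive
semidefinite. Conversely, write `X - Γ` as the Gram matrix of vectors `bᵢ`: the vectors
`ψᵢ = √ηᵢ • eᵢ + bᵢ`, with `bᵢ` placed orthogonally to the standard basis `eᵢ`, have Gram matrix
`Γ + (X - Γ) = X`, the same as the `φᵢ`. Families with equal Gram matrices differ by an isometry
between their spans, which in finite dimension extends to the whole space; it realizes `φᵢ ↦ eᵢ`.
-/

universe u

variable {𝕜 : Type u} [RCLike 𝕜]

theorem Matrix.PosSemidef.exists_eq_gram {ι : Type*} [Fintype ι] [DecidableEq ι]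
    {M : Matrix ι ι 𝕜} (hM : M.PosSemidef) : ∃ v : ι → EuclideanSpace 𝕜 ι, M = gram 𝕜 v := by
  open scoped MatrixOrder in
  obtain ⟨B, rfl⟩ := CStarAlgebra.nonneg_iff_eq_star_mul_self.mp hM.nonneg
  refine ⟨fun j => WithLp.toLp 2 fun i => B i j, ?_⟩
  rw [gram_eq_conjTranspose_mul (EuclideanSpace.basisFun ι 𝕜)]
  rfl

section
variable {ι E F : Type*} [Fintype ι]
  [NormedAddCommGroup E] [InnerProductSpace 𝕜 E] [NormedAddCommGroup F] [InnerProductSpace 𝕜 F]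

theorem inner_linearCombination_eq_of_gram_eq {v : ι → E} {w : ι → F} (h : gram 𝕜 v = gram 𝕜 w)
    (c d : ι → 𝕜) :
    ⟪Fintype.linearCombination 𝕜 v c, Fintype.linearCombination 𝕜 v d⟫_𝕜 =
      ⟪Fintype.linearCombination 𝕜 w c, Fintype.linearCombination 𝕜 w d⟫_𝕜 := by
  simp only [Fintype.linearCombination_apply, ← star_dotProduct_gram_mulVec, h]

theorem exists_linearIsometry_span_of_gram_eq {v : ι → E} {w : ι → F}
    (h : gram 𝕜 v = gram 𝕜 w) :
    ∃ L : span 𝕜 (Set.range v) →ₗᵢ[𝕜] F,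
      ∀ i, L ⟨v i, subset_span (Set.mem_range_self i)⟩ = w i := by
  classical
  set a := Fintype.linearCombination 𝕜 v
  set b := Fintype.linearCombination 𝕜 w
  have hker : LinearMap.ker a ≤ LinearMap.ker b := fun c hc => by
    have := inner_linearCombination_eq_of_gram_eq h c c
    rwa [LinearMap.mem_ker.mp hc, inner_zero_left, eq_comm, inner_self_eq_zero] at this
  let g := (LinearMap.ker a).liftQ b hker ∘ₗ a.quotKerEquivRange.symm.toLinearMap
  have hg : ∀ c, g ⟨a c, LinearMap.mem_range_self a c⟩ = b c := fun c => by
    simp [g, LinearMap.quotKerEquivRange_symm_apply_image]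
  let L : LinearMap.range a →ₗᵢ[𝕜] F := g.isometryOfInner <| by
    rintro ⟨-, c, rfl⟩ ⟨-, d, rfl⟩
    rw [hg, hg]
    exact (inner_linearCombination_eq_of_gram_eq h c d).symm
  refine ⟨L.comp (LinearIsometryEquiv.ofEq _ _
    (Fintype.range_linearCombination 𝕜 v).symm).toLinearIsometry, fun i => ?_⟩
  have hvi : v i = a (Pi.single i 1) := by simp [a]
  calc L _ = L ⟨a (Pi.single i 1), LinearMap.mem_range_self a _⟩ := congrArg L (Subtype.ext hvi)
    _ = w i := (hg _).trans (by simp [b])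

theorem exists_linearIsometry_apply_eq_of_gram_eq [FiniteDimensional 𝕜 E] {v w : ι → E}
    (h : gram 𝕜 v = gram 𝕜 w) : ∃ T : E →ₗᵢ[𝕜] E, ∀ i, T (v i) = w i := by
  obtain ⟨L, hL⟩ := exists_linearIsometry_span_of_gram_eq h
  exact ⟨L.extend, fun i => (L.extend_apply _).trans (hL i)⟩

end

namespace Orthonormal

variable {ι E : Type*} [Fintype ι] [NormedAddCommGroup E] [InnerProductSpace 𝕜 E] {e : ι → E}

noncomputable def euclideanLinearIsometry (he : Orthonormal 𝕜 e) : EuclideanSpace 𝕜 ι →ₗᵢ[𝕜] E :=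
  (Fintype.linearCombination 𝕜 e ∘ₗ (WithLp.linearEquiv 2 𝕜 (ι → 𝕜)).toLinearMap).isometryOfInner
    fun x y => by simp [Fintype.linearCombination_apply, he.inner_sum, PiLp.inner_apply, mul_comm]

theorem euclideanLinearIsometry_apply (he : Orthonormal 𝕜 e) (x : EuclideanSpace 𝕜 ι) :
    he.euclideanLinearIsometry x = ∑ i, x i • e i :=
  rfl

theorem inner_euclideanLinearIsometry_eq_zero {κ : Type*} [Fintype κ] {f : κ → E}
    (he : Orthonormal 𝕜 e) (hf : Orthonormal 𝕜 f) (hef : ∀ i j, ⟪e i, f j⟫_𝕜 = 0)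
    (x : EuclideanSpace 𝕜 ι) (y : EuclideanSpace 𝕜 κ) :
    ⟪he.euclideanLinearIsometry x, hf.euclideanLinearIsometry y⟫_𝕜 = 0 := by
  simp [euclideanLinearIsometry_apply, inner_sum, sum_inner, inner_smul_left, inner_smul_right, hef]

end Orthonormal

theorem LinearIsometry.gram_comp {ι E F : Type*} [NormedAddCommGroup E] [InnerProductSpace 𝕜 E]
    [NormedAddCommGroup F] [InnerProductSpace 𝕜 F] (f : E →ₗᵢ[𝕜] F) (v : ι → E) :
    gram 𝕜 (f ∘ v) = gram 𝕜 v := by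
  ext i j
  exact f.inner_map_map (v i) (v j)

section Realization

variable {ι H K W : Type*} [NormedAddCommGroup H] [InnerProductSpace 𝕜 H]
  [NormedAddCommGroup K] [InnerProductSpace 𝕜 K] [NormedAddCommGroup W] [InnerProductSpace 𝕜 W]

def IsIsometricRealization (φ : ι → H) (χ : ι → K) (η : ι → ℝ) (U : H →ₗᵢ[𝕜] W)
    (J : K →ₗᵢ[𝕜] W) (β : ι → W) : Prop :=
  (∀ i, ∀ x : K, ⟪J x, β i⟫_𝕜 = 0) ∧ ∀ i, U (φ i) = (Real.sqrt (η i) : 𝕜) • J (χ i) + β i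

theorem gram_sqrt_smul_add_eq_diagonal_add_gram [DecidableEq ι] {χ : ι → K}
    (hχ : Orthonormal 𝕜 χ) {η : ι → ℝ} (hη : ∀ i, 0 ≤ η i) (J : K →ₗᵢ[𝕜] W) {β : ι → W}
    (hJβ : ∀ i, ∀ x : K, ⟪J x, β i⟫_𝕜 = 0) :
    gram 𝕜 (fun i => (Real.sqrt (η i) : 𝕜) • J (χ i) + β i) =
      diagonal (fun i => (η i : 𝕜)) + gram 𝕜 β := by
  ext i j
  have hβJ : ⟪β i, J (χ j)⟫_𝕜 = 0 := by rw [← inner_conj_symm, hJβ, map_zero]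
  simp only [gram_apply, Matrix.add_apply, diagonal_apply, inner_add_left, inner_add_right,
    inner_smul_left, inner_smul_right, J.inner_map_map, orthonormal_iff_ite.mp hχ, hJβ, hβJ,
    RCLike.conj_ofReal, mul_zero, add_zero, zero_add]
  split_ifs with hij
  · subst hij
    rw [mul_one, ← RCLike.ofReal_mul, Real.mul_self_sqrt (hη i)]
  · rw [mul_zero, mul_zero]

theorem IsIsometricRealization.gram_sub_diagonal_eq [DecidableEq ι] {φ : ι → H} {χ : ι → K}
    {η : ι → ℝ} {U : H →ₗᵢ[𝕜] W} {J : K →ₗᵢ[𝕜] W} {β : ι → W}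
    (h : IsIsometricRealization φ χ η U J β) (hχ : Orthonormal 𝕜 χ) (hη : ∀ i, 0 ≤ η i) :
    gram 𝕜 φ - diagonal (fun i => (η i : 𝕜)) = gram 𝕜 β := by
  rw [← U.gram_comp, show U ∘ φ = _ from funext h.2,
    gram_sqrt_smul_add_eq_diagonal_add_gram hχ hη J h.1, add_sub_cancel_left]

theorem exists_isIsometricRealization_of_posSemidef {ι : Type u} [Fintype ι] [DecidableEq ι]
    [FiniteDimensional 𝕜 H] (φ : ι → H) {η : ι → ℝ} (hη : ∀ i, 0 ≤ η i)
    (hX : (gram 𝕜 φ - diagonal fun i => (η i : 𝕜)).PosSemidef) :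
    ∃ (W : Type u) (_ : NormedAddCommGroup W) (_ : InnerProductSpace 𝕜 W)
      (_ : FiniteDimensional 𝕜 W) (U : H →ₗᵢ[𝕜] W) (J : EuclideanSpace 𝕜 ι →ₗᵢ[𝕜] W)
      (β : ι → W), IsIsometricRealization φ (fun i => EuclideanSpace.single i 1) η U J β := by
  obtain ⟨b, hb⟩ := hX.exists_eq_gram
  -- the three summands carry the range of `J`, the `β i`, and an isometric copy `I` of `H`
  let W := EuclideanSpace 𝕜 (ι ⊕ ι ⊕ Fin (Module.finrank 𝕜 H))
  have hsingle : Orthonormal 𝕜 fun k => (EuclideanSpace.single k 1 : W) :=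
    EuclideanSpace.orthonormal_single
  have hJ := hsingle.comp _ Sum.inl_injective
  have hB := hsingle.comp _ (Sum.inr_injective.comp Sum.inl_injective)
  have hI := hsingle.comp _ (Sum.inr_injective.comp Sum.inr_injective)
  let J := hJ.euclideanLinearIsometry
  let β := fun i => hB.euclideanLinearIsometry (b i)
  let I := hI.euclideanLinearIsometry.comp (stdOrthonormalBasis 𝕜 H).repr.toLinearIsometry
  have hJβ : ∀ i, ∀ x, ⟪J x, β i⟫_𝕜 = 0 := fun i x =>
    Orthonormal.inner_euclideanLinearIsometry_eq_zero hJ hB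
      (fun k l => by simp [EuclideanSpace.inner_single_left]) x (b i)
  have hgram : gram 𝕜 (I ∘ φ) =
      gram 𝕜 (fun i => (Real.sqrt (η i) : 𝕜) • J (EuclideanSpace.single i 1) + β i) := by
    rw [I.gram_comp,
      gram_sqrt_smul_add_eq_diagonal_add_gram EuclideanSpace.orthonormal_single hη J hJβ,
      show β = _ ∘ b from rfl, LinearIsometry.gram_comp, ← hb, add_sub_cancel]
  obtain ⟨T, hT⟩ := exists_linearIsometry_apply_eq_of_gram_eq hgram
  exact ⟨W, _, _, inferInstance, T.comp I, J, β, hJβ, hT⟩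

end Realization

theorem unambiguous_discrimination_iff_general {n : ℕ} {H : Type*}
    [NormedAddCommGroup H] [InnerProductSpace ℂ H] [FiniteDimensional ℂ H]
    (φ : Fin n → H) (η : Fin n → ℝ)
    (hη : ∀ i, η i ∈ Set.Icc (0 : ℝ) 1) :
    ((Matrix.of fun i j => (inner ℂ (φ i) (φ j) : ℂ))
        - Matrix.diagonal fun i => (η i : ℂ)).PosSemidef
      ↔
    (∃ (K : Type) (_ : NormedAddCommGroup K) (_ : InnerProductSpace ℂ K)
        (_ : FiniteDimensional ℂ K) (χ : Fin n → K),
        Orthonormal ℂ χ ∧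
        ∃ (W : Type) (_ : NormedAddCommGroup W) (_ : InnerProductSpace ℂ W)
          (_ : FiniteDimensional ℂ W) (U : H →ₗᵢ[ℂ] W) (J : K →ₗᵢ[ℂ] W)
          (β : Fin n → W),
            (∀ i, ∀ x : K, (inner ℂ (J x) (β i) : ℂ) = 0) ∧
            (∀ i, U (φ i) = (Real.sqrt (η i) : ℂ) • J (χ i) + β i)) := by
  have hη₀ : ∀ i, 0 ≤ η i := fun i => (hη i).1
  constructor
  · intro hX
    obtain ⟨W, iW, iW', iW'', U, J, β, hUJβ⟩ :=
      exists_isIsometricRealization_of_posSemidef φ hη₀ hX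
    exact ⟨_, _, _, inferInstance, _, EuclideanSpace.orthonormal_single, W, iW, iW', iW'', U, J, β,
      hUJβ⟩
  · rintro ⟨K, _, _, _, χ, hχ, W, _, _, _, U, J, β, hUJβ⟩
    have hgram : gram ℂ φ - diagonal (fun i => (η i : ℂ)) = gram ℂ β :=
      IsIsometricRealization.gram_sub_diagonal_eq hUJβ hχ hη₀
    change (gram ℂ φ - _).PosSemidef
    rw [hgram]
    exact posSemidef_gram ℂ β

/-- unambiguous state discrimination criterion.
For unit vectors `φ₁, …, φₙ ∈ H` with Gram matrix `X` and success probabilities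
`η₁, …, ηₙ ∈ [0,1]`, the matrix `X − Γ` (with `Γ = diag(η₁, …, ηₙ)`) is positive
semidefinite if and only if there exist an orthonormal family `χ₁, …, χₙ` in some
finite-dimensional complex inner product space `K` and an isometric realization of
the transformation `φᵢ ↦ χᵢ` with success probabilities `ηᵢ`. -/
theorem unambiguous_discrimination_iff {n : ℕ} {H : Type*}
    [NormedAddCommGroup H] [InnerProductSpace ℂ H] [FiniteDimensional ℂ H]
    (φ : Fin n → H) (η : Fin n → ℝ)
    (hφ : ∀ i, ‖φ i‖ = 1) (hη : ∀ i, η i ∈ Set.Icc (0 : ℝ) 1) :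
    ((Matrix.of fun i j => (inner ℂ (φ i) (φ j) : ℂ))
        - Matrix.diagonal fun i => (η i : ℂ)).PosSemidef
      ↔
    (∃ (K : Type) (_ : NormedAddCommGroup K) (_ : InnerProductSpace ℂ K)
        (_ : FiniteDimensional ℂ K) (χ : Fin n → K),
        Orthonormal ℂ χ ∧
        ∃ (W : Type) (_ : NormedAddCommGroup W) (_ : InnerProductSpace ℂ W)
          (_ : FiniteDimensional ℂ W) (U : H →ₗᵢ[ℂ] W) (J : K →ₗᵢ[ℂ] W)
          (β : Fin n → W),
            (∀ i, ∀ x : K, (inner ℂ (J x) (β i) : ℂ) = 0) ∧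
            (∀ i, U (φ i) = (Real.sqrt (η i) : ℂ) • J (χ i) + β i)) :=
  unambiguous_discrimination_iff_general φ η hη
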